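/- Let 0 < μ < η, let G : cl(Ω) → ℝ be continuous with sup_{x ∈ cl(O_η)} |G(x) − F_v(x)| ≤ μ, and set O^μ_η = {x ∈ Ω \ (K_src ∪ K_dst) : G(x) < inf_{y ∈ Ω} F_v(y) + η}. If Γ* is nonempty, then Γ* ⊆ cl(O^μ_η), and for every x ∈ Γ* one has v^{cl(O^μ_η)}_s←(x) = v_s←(x) and v^{cl(O^μ_η)}_→d(x) = v_→d(x). -/

import Mathlib

open Set Metric MeasureTheory
open scoped ENNReal

noncomputable section

/-- Points of the `d`-dimensional Euclidean space. -/
abbrev Pt (d : ℕ) := EuclideanSpace ℝ (Fin d)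

/-- A control: a measurable map valued in the unit sphere. -/
def IsControl {d : ℕ} (α : ℝ → Pt d) : Prop :=
  Measurable α ∧ ∀ t, ‖α t‖ = 1

/-- Admissible trajectory (in integral form, i.e. an absolutely continuous solution of the
controlled ODE) with control `α`, constrained to stay in `K`, with direction sign `σ`
(`σ = 1`: forward dynamics `y' = f(y,α)·α`; `σ = -1`: reverse dynamics `y' = -f(y,α)·α`),
starting at `x`, with horizon `τ`. -/
def IsTrajCtrl {d : ℕ} (K : Set (Pt d)) (f : Pt d → Pt d → ℝ) (σ : ℝ)
    (x : Pt d) (τ : ℝ) (y α : ℝ → Pt d) : Prop :=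
  0 ≤ τ ∧ y 0 = x ∧ (∀ t ∈ Icc 0 τ, y t ∈ K) ∧ IsControl α ∧
    ∀ t ∈ Icc 0 τ, y t = x + ∫ s in (0:ℝ)..t, (σ * f (y s) (α s)) • α s

/-- Admissible trajectory, for some control. -/
def IsTraj {d : ℕ} (K : Set (Pt d)) (f : Pt d → Pt d → ℝ) (σ : ℝ)
    (x : Pt d) (τ : ℝ) (y : ℝ → Pt d) : Prop :=
  ∃ α, IsTrajCtrl K f σ x τ y α

/-- Set of horizons of admissible trajectories from `x` ending in `target`. -/
def reachTimes {d : ℕ} (K : Set (Pt d)) (f : Pt d → Pt d → ℝ) (σ : ℝ)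
    (target : Set (Pt d)) (x : Pt d) : Set ℝ :=
  {τ | ∃ y : ℝ → Pt d, IsTraj K f σ x τ y ∧ y τ ∈ target}

/-- Minimum time, `∞` if the target is unreachable (`inf ∅ = ∞`). -/
def minTime {d : ℕ} (K : Set (Pt d)) (f : Pt d → Pt d → ℝ) (σ : ℝ)
    (target : Set (Pt d)) (x : Pt d) : ℝ≥0∞ :=
  ⨅ τ ∈ reachTimes K f σ target x, ENNReal.ofReal τ

/-- Kruzkov transform `1 - e^{-T}`, with the convention `e^{-∞} = 0`. -/
def kruzkov (T : ℝ≥0∞) : ℝ := if T = ∞ then 1 else 1 - Real.exp (-T.toReal)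

/-- Value function (Kruzkov transform of the minimum time). -/
def val {d : ℕ} (K : Set (Pt d)) (f : Pt d → Pt d → ℝ) (σ : ℝ)
    (target : Set (Pt d)) (x : Pt d) : ℝ :=
  kruzkov (minTime K f σ target x)

/-- Geodesic points from `x`: points `y(t)` of optimal trajectories from `x` to `target`. -/
def geodPts {d : ℕ} (K : Set (Pt d)) (f : Pt d → Pt d → ℝ) (σ : ℝ)
    (target : Set (Pt d)) (x : Pt d) : Set (Pt d) :=
  {p | ∃ τ y, IsTraj K f σ x τ y ∧ y τ ∈ target ∧
    ENNReal.ofReal τ = minTime K f σ target x ∧ ∃ t ∈ Icc 0 τ, p = y t}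

/-- δ-geodesic points from `x`: points `y(t)` of δ-optimal trajectories from `x` to `target`. -/
def deltaGeodPts {d : ℕ} (K : Set (Pt d)) (f : Pt d → Pt d → ℝ) (σ : ℝ)
    (target : Set (Pt d)) (x : Pt d) (δ : ℝ) : Set (Pt d) :=
  {p | ∃ τ y, IsTraj K f σ x τ y ∧ y τ ∈ target ∧
    1 - Real.exp (-τ) ≤ val K f σ target x + δ ∧ ∃ t ∈ Icc 0 τ, p = y t}

/-- The setting of the minimum time problem: a nonempty bounded open domain `Ω ⊆ ℝ^d` with
`d ≥ 1`, a positive continuous bounded Lipschitz speed function `f` on `cl(Ω) × S₁`, and two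
disjoint nonempty compact subsets `K_src, K_dst` of `Ω`. -/
structure Setting (d : ℕ) where
  Ω : Set (Pt d)
  f : Pt d → Pt d → ℝ
  Mf : ℝ
  Lf : ℝ
  Lfa : ℝ
  Ksrc : Set (Pt d)
  Kdst : Set (Pt d)
  hd : 1 ≤ d
  hΩopen : IsOpen Ω
  hΩbdd : Bornology.IsBounded Ω
  hΩne : Ω.Nonempty
  hfcont : ContinuousOn (fun p : Pt d × Pt d => f p.1 p.2) (closure Ω ×ˢ sphere (0 : Pt d) 1)
  hfpos : ∀ x ∈ closure Ω, ∀ a ∈ sphere (0 : Pt d) 1, 0 < f x a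
  hfbdd : ∀ x ∈ closure Ω, ∀ a ∈ sphere (0 : Pt d) 1, f x a ≤ Mf
  hfLipx : ∀ a ∈ sphere (0 : Pt d) 1, ∀ x ∈ closure Ω, ∀ x' ∈ closure Ω,
    |f x a - f x' a| ≤ Lf * ‖x - x'‖
  hfLipa : ∀ x ∈ closure Ω, ∀ a ∈ sphere (0 : Pt d) 1, ∀ a' ∈ sphere (0 : Pt d) 1,
    |f x a - f x a'| ≤ Lfa * ‖a - a'‖
  hKsrcComp : IsCompact Ksrc
  hKdstComp : IsCompact Kdst
  hKsrcNe : Ksrc.Nonempty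
  hKdstNe : Kdst.Nonempty
  hKsrcSub : Ksrc ⊆ Ω
  hKdstSub : Kdst ⊆ Ω
  hKdisj : Disjoint Ksrc Kdst

namespace Setting

variable {d : ℕ} (S : Setting d)

/-- Minimum time to destination `T_→d`. -/
def Td (x : Pt d) : ℝ≥0∞ := minTime (closure S.Ω) S.f 1 S.Kdst x

/-- Minimum time from source `T_s←` (reverse dynamics). -/
def Ts (x : Pt d) : ℝ≥0∞ := minTime (closure S.Ω) S.f (-1) S.Ksrc x

/-- Value function to destination `v_→d = 1 - e^{-T_→d}`. -/
def vd (x : Pt d) : ℝ := val (closure S.Ω) S.f 1 S.Kdst x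

/-- Value function from source `v_s← = 1 - e^{-T_s←}`. -/
def vs (x : Pt d) : ℝ := val (closure S.Ω) S.f (-1) S.Ksrc x

/-- State-constrained value function to destination: trajectories confined to `K`. -/
def vdC (K : Set (Pt d)) (x : Pt d) : ℝ := val K S.f 1 S.Kdst x

/-- State-constrained value function from source: trajectories confined to `K`. -/
def vsC (K : Set (Pt d)) (x : Pt d) : ℝ := val K S.f (-1) S.Ksrc x

/-- `F_v(x) = v_s←(x) + v_→d(x) − v_s←(x)·v_→d(x)`. -/
def Fv (x : Pt d) : ℝ := S.vs x + S.vd x - S.vs x * S.vd x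

/-- The neighborhood `O_η` of the optimal trajectories. -/
def Oset (η : ℝ) : Set (Pt d) :=
  {x ∈ S.Ω \ (S.Ksrc ∪ S.Kdst) | S.Fv x < sInf (S.Fv '' S.Ω) + η}

/-- `X_src = Argmin_{x ∈ K_src} v_→d(x)`. -/
def Xsrc : Set (Pt d) := {x ∈ S.Ksrc | ∀ z ∈ S.Ksrc, S.vd x ≤ S.vd z}

/-- `X_dst = Argmin_{x ∈ K_dst} v_s←(x)`. -/
def Xdst : Set (Pt d) := {x ∈ S.Kdst | ∀ z ∈ S.Kdst, S.vs x ≤ S.vs z}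

/-- The set of forward geodesic points `∪_{x ∈ X_src} Γ*_x`. -/
def GammaFwd : Set (Pt d) := ⋃ x ∈ S.Xsrc, geodPts (closure S.Ω) S.f 1 S.Kdst x

/-- The set of reverse geodesic points `∪_{x ∈ X_dst} Γ̃*_x`. -/
def GammaRev : Set (Pt d) := ⋃ x ∈ S.Xdst, geodPts (closure S.Ω) S.f (-1) S.Ksrc x

/-- `v* = inf_{x ∈ K_src} v_→d(x)`. -/
def vStar : ℝ := sInf (S.vd '' S.Ksrc)

/-- `X_src^δ = {x ∈ ∂K_src : v_→d(x) ≤ v* + δ}`. -/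
def XsrcD (δ : ℝ) : Set (Pt d) := {x ∈ frontier S.Ksrc | S.vd x ≤ S.vStar + δ}

/-- `X_dst^δ = {x ∈ ∂K_dst : v_s←(x) ≤ v* + δ}`. -/
def XdstD (δ : ℝ) : Set (Pt d) := {x ∈ frontier S.Kdst | S.vs x ≤ S.vStar + δ}

/-- The set of forward δ-geodesic points `Γ^δ`. -/
def GammaD (δ : ℝ) : Set (Pt d) :=
  ⋃ δ' ∈ Icc (0:ℝ) δ, ⋃ x ∈ S.XsrcD (δ - δ'), deltaGeodPts (closure S.Ω) S.f 1 S.Kdst x δ'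

/-- The set of reverse δ-geodesic points. -/
def GammaDRev (δ : ℝ) : Set (Pt d) :=
  ⋃ δ' ∈ Icc (0:ℝ) δ, ⋃ x ∈ S.XdstD (δ - δ'), deltaGeodPts (closure S.Ω) S.f (-1) S.Ksrc x δ'

end Setting

/-!
Let `y` be an optimal trajectory of horizon `τ` from a minimiser `x₀ ∈ X_src`. Reversing a
trajectory from `z` back to `K_src` and continuing it by a trajectory from `z` to `K_dst` gives
`T_→d(x₀) ≤ T_s←(z) + T_→d(z)` for every `z`, while the two pieces of `y` show
`T_s←(y u) ≤ u` and `T_→d(y u) ≤ τ - u`; hence both are equalities. Since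
`F_v = 1 - e^{-(T_s← + T_→d)}`, the points of `y` minimise `F_v`, and for `0 < u < τ` they avoid
`K_src ∪ K_dst`. By continuity of `F_v` they are limits of points `z ∈ Ω \ (K_src ∪ K_dst)` with
`F_v(z) < inf F_v + η - μ`; such `z` lie in `O_η`, so `G(z) < inf F_v + η` and `z ∈ O^μ_η`.
Thus all of `y` lies in `cl(O^μ_η)`, and its two pieces realise the unconstrained optimal times
inside `cl(O^μ_η)`.
-/

open intervalIntegral Filter Topology

lemma kruzkov_strictMono : StrictMono kruzkov := by
  intro T T' h
  have hT : T ≠ ∞ := h.ne_top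
  rw [kruzkov, kruzkov, if_neg hT]
  split_ifs with hT'
  · linarith [Real.exp_pos (-T.toReal)]
  · gcongr

lemma kruzkov_add (T T' : ℝ≥0∞) :
    kruzkov (T + T') = kruzkov T + kruzkov T' - kruzkov T * kruzkov T' := by
  by_cases hT : T = ∞
  · simp [kruzkov, hT]
  by_cases hT' : T' = ∞
  · simp [kruzkov, hT']
  simp only [kruzkov, ENNReal.add_eq_top, hT, hT', or_self, if_false,
    ENNReal.toReal_add hT hT', neg_add, Real.exp_add]
  ring

lemma ENNReal.eq_and_eq_of_add_le {a b c e : ℝ≥0∞} (ha : a ≤ c) (hb : b ≤ e)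
    (hc : c ≠ ∞) (he : e ≠ ∞) (h : c + e ≤ a + b) : a = c ∧ b = e :=
  ⟨le_antisymm ha (ENNReal.le_of_add_le_add_right he (h.trans (add_le_add le_rfl hb))),
    le_antisymm hb (ENNReal.le_of_add_le_add_left hc (h.trans (add_le_add ha le_rfl)))⟩

lemma mem_closure_sep_lt {X : Type*} [TopologicalSpace X] {s A : Set X} {F : X → ℝ} {p : X}
    {c : ℝ} (hp : p ∈ closure s) (hF : ContinuousWithinAt F s p) (hA : IsClosed A)
    (hpA : p ∉ A) (hc : F p < c) : p ∈ closure {z ∈ s \ A | F z < c} := by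
  have : (𝓝[s] p).NeBot := mem_closure_iff_nhdsWithin_neBot.1 hp
  have hev : ∀ᶠ z in 𝓝[s] p, z ∈ {z ∈ s \ A | F z < c} := by
    filter_upwards [self_mem_nhdsWithin, nhdsWithin_le_nhds (hA.isOpen_compl.mem_nhds hpA),
      hF.eventually_lt_const hc] with z hzs hzA hzF using ⟨⟨hzs, hzA⟩, hzF⟩
  exact mem_closure_iff_frequently.2 (hev.frequently.filter_mono nhdsWithin_le_nhds)

section MinTime

variable {d : ℕ} {K K' : Set (Pt d)} {f : Pt d → Pt d → ℝ} {σ : ℝ} {target : Set (Pt d)}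
  {x : Pt d} {τ : ℝ}

lemma minTime_le_ofReal (h : τ ∈ reachTimes K f σ target x) :
    minTime K f σ target x ≤ ENNReal.ofReal τ :=
  iInf₂_le τ h

lemma reachTimes_mono (hK : K ⊆ K') : reachTimes K f σ target x ⊆ reachTimes K' f σ target x :=
  fun _ ⟨y, ⟨α, hτ, hy0, hyK, hα, hid⟩, hend⟩ =>
    ⟨y, ⟨α, hτ, hy0, fun t ht => hK (hyK t ht), hα, hid⟩, hend⟩

lemma minTime_le_of_subset (hK : K ⊆ K') : minTime K' f σ target x ≤ minTime K f σ target x :=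
  le_iInf₂ fun _ hτ => minTime_le_ofReal (reachTimes_mono hK hτ)

lemma val_eq_of_subset (hK : K ⊆ K') (hτ : τ ∈ reachTimes K f σ target x)
    (hopt : minTime K' f σ target x = ENNReal.ofReal τ) :
    val K f σ target x = val K' f σ target x :=
  congrArg kruzkov <|
    le_antisymm ((minTime_le_ofReal hτ).trans hopt.ge) (minTime_le_of_subset hK)

lemma minTime_eq_zero (hd : 1 ≤ d) (hxK : x ∈ K) (hxt : x ∈ target) :
    minTime K f σ target x = 0 := by
  refine nonpos_iff_eq_zero.1 (ENNReal.ofReal_zero ▸ minTime_le_ofReal ?_)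
  refine ⟨fun _ => x, ⟨fun _ => EuclideanSpace.single ⟨0, hd⟩ 1, le_rfl, rfl,
    fun _ _ => hxK, ⟨measurable_const, fun _ => by simp⟩, fun t ht => ?_⟩, hxt⟩
  simp [le_antisymm ht.2 ht.1]

end MinTime

lemma integral_concat {E : Type*} [NormedAddCommGroup E] [NormedSpace ℝ E] {g g₁ g₂ : ℝ → E}
    {a τ₁ t : ℝ} (hτ₁ : a ≤ τ₁) (ht : τ₁ ≤ t) (hg₁ : ∀ s ≤ τ₁, g s = g₁ s)
    (hg₂ : ∀ s > τ₁, g s = g₂ (s - τ₁)) (hint₁ : IntervalIntegrable g₁ volume a τ₁)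
    (hint₂ : IntervalIntegrable g₂ volume 0 (t - τ₁)) :
    ∫ s in a..t, g s = (∫ s in a..τ₁, g₁ s) + ∫ s in (0 : ℝ)..(t - τ₁), g₂ s := by
  have h₁ : EqOn g₁ g (uIoc a τ₁) := fun s hs => (hg₁ s (uIoc_of_le hτ₁ ▸ hs).2).symm
  have h₂ : EqOn (fun s => g₂ (s - τ₁)) g (uIoc τ₁ t) := fun s hs =>
    (hg₂ s (uIoc_of_le ht ▸ hs).1).symm
  have hint₂' : IntervalIntegrable (fun s => g₂ (s - τ₁)) volume τ₁ t := by
    simpa using hint₂.comp_sub_right τ₁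
  rw [← integral_add_adjacent_intervals (hint₁.congr h₁) (hint₂'.congr h₂),
    integral_congr_ae (.of_forall fun s hs => (h₁ hs).symm),
    integral_congr_ae (.of_forall fun s hs => (h₂ hs).symm), integral_comp_sub_right, sub_self]

namespace IsTrajCtrl

variable {d : ℕ} {K K' : Set (Pt d)} {f : Pt d → Pt d → ℝ} {σ : ℝ} {x : Pt d} {τ : ℝ}
  {y α : ℝ → Pt d} {target : Set (Pt d)}

lemma mono_set (h : IsTrajCtrl K f σ x τ y α) (hK' : ∀ t ∈ Icc 0 τ, y t ∈ K') :
    IsTrajCtrl K' f σ x τ y α :=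
  ⟨h.1, h.2.1, hK', h.2.2.2⟩

lemma sub_eq_integral (h : IsTrajCtrl K f σ x τ y α)
    (hint : IntervalIntegrable (fun s => (σ * f (y s) (α s)) • α s) volume 0 τ)
    {a b : ℝ} (ha : a ∈ Icc 0 τ) (hb : b ∈ Icc 0 τ) :
    y b - y a = ∫ s in a..b, (σ * f (y s) (α s)) • α s := by
  have hsub : ∀ t ∈ Icc 0 τ, uIcc 0 t ⊆ uIcc 0 τ := fun t ht =>
    uIcc_subset_uIcc_left (Icc_subset_uIcc ht)
  rw [h.2.2.2.2 b hb, h.2.2.2.2 a ha, add_sub_add_left_eq_sub,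
    integral_interval_sub_left (hint.mono_set (hsub b hb)) (hint.mono_set (hsub a ha))]

lemma shift (h : IsTrajCtrl K f σ x τ y α)
    (hint : IntervalIntegrable (fun s => (σ * f (y s) (α s)) • α s) volume 0 τ)
    {t : ℝ} (ht : t ∈ Icc 0 τ) :
    IsTrajCtrl K f σ (y t) (τ - t) (fun s => y (t + s)) (fun s => α (t + s)) := by
  have ⟨_, _, hyK, ⟨hαm, hα1⟩, _⟩ := h
  have hmem : ∀ s ∈ Icc 0 (τ - t), t + s ∈ Icc 0 τ := fun s hs =>
    ⟨by linarith [ht.1, hs.1], by linarith [hs.2]⟩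
  refine ⟨sub_nonneg.2 ht.2, by simp, fun s hs => hyK _ (hmem s hs),
    ⟨hαm.comp (measurable_const_add t), fun s => hα1 _⟩, fun s hs => ?_⟩
  set g : ℝ → Pt d := fun s => (σ * f (y s) (α s)) • α s
  change y (t + s) = y t + ∫ u in (0 : ℝ)..s, g (t + u)
  rw [integral_comp_add_left g t, add_zero, ← h.sub_eq_integral hint ht (hmem s hs),
    add_sub_cancel]

lemma reverse (h : IsTrajCtrl K f σ x τ y α)
    (hint : IntervalIntegrable (fun s => (σ * f (y s) (α s)) • α s) volume 0 τ)
    {t : ℝ} (ht : t ∈ Icc 0 τ) :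
    IsTrajCtrl K f (-σ) (y t) t (fun s => y (t - s)) (fun s => α (t - s)) := by
  have ⟨_, _, hyK, ⟨hαm, hα1⟩, _⟩ := h
  have hmem : ∀ s ∈ Icc 0 t, t - s ∈ Icc 0 τ := fun s hs =>
    ⟨by linarith [hs.2], by linarith [hs.1, ht.2]⟩
  refine ⟨ht.1, by simp, fun s hs => hyK _ (hmem s hs),
    ⟨hαm.comp (measurable_const_sub t), fun s => hα1 _⟩, fun s hs => ?_⟩
  set g : ℝ → Pt d := fun s => (σ * f (y s) (α s)) • α s
  simp_rw [neg_mul, neg_smul, intervalIntegral.integral_neg]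
  change y (t - s) = y t + -∫ u in (0 : ℝ)..s, g (t - u)
  rw [integral_comp_sub_left g t, sub_zero,
    ← h.sub_eq_integral hint (hmem s hs) ht, neg_sub, add_sub_cancel]

lemma add_mem_reachTimes {τ₁ τ₂ : ℝ} {y₁ α₁ y₂ α₂ : ℝ → Pt d}
    (h₁ : IsTrajCtrl K f σ x τ₁ y₁ α₁) (h₂ : IsTrajCtrl K f σ (y₁ τ₁) τ₂ y₂ α₂)
    (hint₁ : IntervalIntegrable (fun s => (σ * f (y₁ s) (α₁ s)) • α₁ s) volume 0 τ₁)
    (hint₂ : IntervalIntegrable (fun s => (σ * f (y₂ s) (α₂ s)) • α₂ s) volume 0 τ₂)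
    (hend : y₂ τ₂ ∈ target) : τ₁ + τ₂ ∈ reachTimes K f σ target x := by
  obtain ⟨hτ₁, hy₁0, hy₁K, ⟨hα₁m, hα₁1⟩, hid₁⟩ := h₁
  obtain ⟨hτ₂, hy₂0, hy₂K, ⟨hα₂m, hα₂1⟩, hid₂⟩ := h₂
  let y : ℝ → Pt d := fun s => if s ≤ τ₁ then y₁ s else y₂ (s - τ₁)
  let α : ℝ → Pt d := fun s => if s ≤ τ₁ then α₁ s else α₂ (s - τ₁)
  have hy₂ : ∀ s ≥ τ₁, y s = y₂ (s - τ₁) := fun s hs => by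
    rcases hs.eq_or_lt with rfl | hs
    · simp [y, hy₂0]
    · simp [y, not_le.2 hs]
  refine ⟨y, ⟨α, by linarith, by simp [y, hτ₁, hy₁0], fun s hs => ?_,
    ⟨Measurable.ite measurableSet_Iic hα₁m (hα₂m.comp (measurable_sub_const τ₁)),
      fun s => by by_cases hs : s ≤ τ₁ <;> simp [α, hs, hα₁1, hα₂1]⟩, fun t ht => ?_⟩,
    by rw [hy₂ _ (by linarith), add_sub_cancel_left]; exact hend⟩
  · by_cases hs' : s ≤ τ₁
    · simpa [y, hs'] using hy₁K s ⟨hs.1, hs'⟩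
    · simpa [y, hs'] using hy₂K (s - τ₁) ⟨by linarith, by linarith [hs.2]⟩
  rcases le_total t τ₁ with htle | htge
  · simp only [y, if_pos htle]
    rw [hid₁ t ⟨ht.1, htle⟩]
    congr 1
    refine integral_congr fun s hs => ?_
    simp only [α, if_pos ((uIcc_of_le ht.1 ▸ hs).2.trans htle)]
  · have ht₂ : t - τ₁ ∈ Icc 0 τ₂ := ⟨by linarith, by linarith [ht.2]⟩
    rw [integral_concat hτ₁ htge (fun s hs => by simp only [y, α, if_pos hs])
        (fun s hs => by simp only [y, α, if_neg (not_le.2 hs)]) hint₁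
        (hint₂.mono_set (uIcc_subset_uIcc_left (Icc_subset_uIcc ht₂))),
      hy₂ t htge, hid₂ (t - τ₁) ht₂, hid₁ τ₁ ⟨hτ₁, le_rfl⟩, add_assoc]

end IsTrajCtrl

section Regularity

variable {d : ℕ} {C : Set (Pt d)} {f : Pt d → Pt d → ℝ} {σ M : ℝ} {y α : ℝ → Pt d}

lemma aemeasurable_velocity (hC : IsClosed C)
    (hf : ContinuousOn (fun p : Pt d × Pt d => f p.1 p.2) (C ×ˢ sphere 0 1))
    {μ : Measure ℝ} (hy : AEMeasurable y μ) (hα : IsControl α) (hyC : ∀ᵐ s ∂μ, y s ∈ C) :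
    AEMeasurable (fun s => (σ * f (y s) (α s)) • α s) μ := by
  have hyα : AEMeasurable (fun s => (y s, α s)) μ := hy.prodMk hα.1.aemeasurable
  have hmap : (μ.map fun s => (y s, α s)).restrict (C ×ˢ sphere 0 1) =
      μ.map fun s => (y s, α s) := by
    refine Measure.restrict_eq_self_of_ae_mem ((ae_map_iff hyα
      (hC.prod isClosed_sphere).measurableSet).2 ?_)
    filter_upwards [hyC] with s hs using ⟨hs, mem_sphere_zero_iff_norm.2 (hα.2 s)⟩
  have hF : AEMeasurable (fun p : Pt d × Pt d => f p.1 p.2) (μ.map fun s => (y s, α s)) :=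
    hmap ▸ hf.aemeasurable (hC.prod isClosed_sphere).measurableSet
  exact (aemeasurable_const.mul (hF.comp_aemeasurable hyα)).smul hα.1.aemeasurable

lemma norm_velocity_le (hM : ∀ p ∈ C, ∀ a ∈ sphere (0 : Pt d) 1, |f p a| ≤ M) {p a : Pt d}
    (hp : p ∈ C) (ha : ‖a‖ = 1) : ‖(σ * f p a) • a‖ ≤ |σ| * M := by
  rw [norm_smul, ha, mul_one, Real.norm_eq_abs, abs_mul]
  exact mul_le_mul_of_nonneg_left (hM p hp a (mem_sphere_zero_iff_norm.2 ha)) (abs_nonneg σ)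

/-- The integral identity in `IsTrajCtrl` does not by itself make the velocity integrable (a
non-integrable integral is `0`). Off the order-connected set `E` of times up to which the velocity
is integrable the trajectory is constant, and on `E` it is Lipschitz: so it is measurable, and then
its bounded velocity is integrable on all of `[0, τ]`. -/
lemma IsTrajCtrl.intervalIntegrable_and_continuousOn {x : Pt d} {τ : ℝ} (hC : IsClosed C)
    (hf : ContinuousOn (fun p : Pt d × Pt d => f p.1 p.2) (C ×ˢ sphere 0 1))
    (hM : ∀ p ∈ C, ∀ a ∈ sphere (0 : Pt d) 1, |f p a| ≤ M) (h : IsTrajCtrl C f σ x τ y α) :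
    IntervalIntegrable (fun s => (σ * f (y s) (α s)) • α s) volume 0 τ ∧
      ContinuousOn y (Icc 0 τ) := by
  obtain ⟨hτ, -, hyC, hα, hid⟩ := h
  set g : ℝ → Pt d := fun s => (σ * f (y s) (α s)) • α s
  set E : Set ℝ := {t ∈ Icc 0 τ | IntervalIntegrable g volume 0 t}
  have hE : E.OrdConnected := ⟨fun a ha b hb c hc => ⟨⟨ha.1.1.trans hc.1, hc.2.trans hb.1.2⟩,
    hb.2.mono_set (uIcc_subset_uIcc_left (Icc_subset_uIcc ⟨ha.1.1.trans hc.1, hc.2⟩))⟩⟩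
  have hlip : LipschitzOnWith (|σ| * M).toNNReal y E := by
    refine LipschitzOnWith.of_dist_le_mul fun a ha b hb => ?_
    rw [dist_eq_norm, hid a ha.1, hid b hb.1, add_sub_add_left_eq_sub,
      integral_interval_sub_left ha.2 hb.2, Real.dist_eq]
    refine (intervalIntegral.norm_integral_le_of_norm_le_const fun s hs => ?_).trans
      (mul_le_mul_of_nonneg_right (Real.le_coe_toNNReal _) (abs_nonneg _))
    exact norm_velocity_le hM (hyC s (uIcc_subset_Icc hb.1 ha.1 (uIoc_subset_uIcc hs))) (hα.2 s)
  have hconst : ∀ t ∈ Icc 0 τ \ E, y t = x := fun t ht => by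
    rw [hid t ht.1, integral_undef fun hi => ht.2 ⟨ht.1, hi⟩, add_zero]
  have hmeas : AEMeasurable y (volume.restrict (Icc 0 τ)) := by
    rw [← union_sdiff_cancel (sep_subset _ _ : E ⊆ Icc 0 τ), aemeasurable_union_iff]
    refine ⟨hlip.continuousOn.aemeasurable hE.measurableSet,
      aemeasurable_const.congr ((ae_restrict_iff' (measurableSet_Icc.diff hE.measurableSet)).2
        (Eventually.of_forall fun t ht => (hconst t ht).symm))⟩
  have hint : IntervalIntegrable g volume 0 τ := by
    rw [intervalIntegrable_iff_integrableOn_Icc_of_le hτ]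
    have hyC' : ∀ᵐ s ∂volume.restrict (Icc 0 τ), y s ∈ C :=
      ae_restrict_of_forall_mem measurableSet_Icc hyC
    exact ⟨(aemeasurable_velocity hC hf hmeas hα hyC').aestronglyMeasurable,
      .restrict_of_bounded (C := |σ| * M) (by simp)
        (hyC'.mono fun s hs => norm_velocity_le hM hs (hα.2 s))⟩
  have hE_eq : E = Icc 0 τ := subset_antisymm (sep_subset _ _) fun t ht =>
    ⟨ht, hint.mono_set (uIcc_subset_uIcc_left (Icc_subset_uIcc ht))⟩
  exact ⟨hint, hE_eq ▸ hlip.continuousOn⟩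

end Regularity

namespace Setting

variable {d : ℕ} (S : Setting d) {σ τ : ℝ} {x : Pt d} {y α : ℝ → Pt d}

lemma intervalIntegrable_and_continuousOn (h : IsTrajCtrl (closure S.Ω) S.f σ x τ y α) :
    IntervalIntegrable (fun s => (σ * S.f (y s) (α s)) • α s) volume 0 τ ∧
      ContinuousOn y (Icc 0 τ) :=
  h.intervalIntegrable_and_continuousOn isClosed_closure S.hfcont fun p hp a ha => by
    rw [abs_of_pos (S.hfpos p hp a ha)]
    exact S.hfbdd p hp a ha

lemma Fv_eq_kruzkov (z : Pt d) : S.Fv z = kruzkov (S.Ts z + S.Td z) :=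
  (kruzkov_add _ _).symm

/-- Dynamic programming: a reverse trajectory from `z` to `w ∈ K_src`, run forwards and followed
by a forward trajectory from `z` to `K_dst`, joins `K_src` to `K_dst`. -/
lemma Td_le_Ts_add_Td {x₀ : Pt d} (hx₀ : x₀ ∈ S.Xsrc) (z : Pt d) :
    S.Td x₀ ≤ S.Ts z + S.Td z := by
  refine ENNReal.le_iInf₂_add_iInf₂ fun t₁ ⟨w, ⟨β, hw⟩, hwsrc⟩ t₂ ⟨y, ⟨α, hy⟩, hydst⟩ => ?_
  have hback := hw.reverse (S.intervalIntegrable_and_continuousOn hw).1 (right_mem_Icc.2 hw.1)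
  rw [neg_neg] at hback
  have hy' : IsTrajCtrl (closure S.Ω) S.f 1 (w (t₁ - t₁)) t₂ y α := by
    rwa [sub_self, hw.2.1]
  calc S.Td x₀ ≤ S.Td (w t₁) := kruzkov_strictMono.le_iff_le.1 (hx₀.2 _ hwsrc)
    _ ≤ ENNReal.ofReal (t₁ + t₂) := minTime_le_ofReal <|
        hback.add_mem_reachTimes hy' (S.intervalIntegrable_and_continuousOn hback).1
          (S.intervalIntegrable_and_continuousOn hy).1 hydst
    _ ≤ ENNReal.ofReal t₁ + ENNReal.ofReal t₂ := ENNReal.ofReal_add_le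

structure IsGeodesic (x₀ : Pt d) (τ : ℝ) (y α : ℝ → Pt d) : Prop where
  mem_Xsrc : x₀ ∈ S.Xsrc
  isTrajCtrl : IsTrajCtrl (closure S.Ω) S.f 1 x₀ τ y α
  mem_Kdst : y τ ∈ S.Kdst
  Td_eq : S.Td x₀ = ENNReal.ofReal τ

lemma exists_isGeodesic_of_mem_GammaFwd {p : Pt d} (hp : p ∈ S.GammaFwd) :
    ∃ x₀ τ y α, S.IsGeodesic x₀ τ y α ∧ ∃ t ∈ Icc 0 τ, p = y t := by
  simp only [GammaFwd, geodPts, mem_iUnion] at hp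
  obtain ⟨x₀, hx₀, τ, y, ⟨α, hy⟩, hend, hopt, t, ht, rfl⟩ := hp
  exact ⟨x₀, τ, y, α, ⟨hx₀, hy, hend, hopt.symm⟩, t, ht, rfl⟩

namespace IsGeodesic

variable {S} {x₀ : Pt d} {K : Set (Pt d)} {u : ℝ}

lemma mem_reachTimes_reverse (hg : S.IsGeodesic x₀ τ y α) (hK : ∀ t ∈ Icc 0 τ, y t ∈ K)
    (hu : u ∈ Icc 0 τ) : u ∈ reachTimes K S.f (-1) S.Ksrc (y u) :=
  ⟨_, ⟨_, (hg.isTrajCtrl.mono_set hK).reverse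
    (S.intervalIntegrable_and_continuousOn hg.isTrajCtrl).1 hu⟩,
    by simpa [hg.isTrajCtrl.2.1] using hg.mem_Xsrc.1⟩

lemma mem_reachTimes_shift (hg : S.IsGeodesic x₀ τ y α) (hK : ∀ t ∈ Icc 0 τ, y t ∈ K)
    (hu : u ∈ Icc 0 τ) : τ - u ∈ reachTimes K S.f 1 S.Kdst (y u) :=
  ⟨_, ⟨_, (hg.isTrajCtrl.mono_set hK).shift
    (S.intervalIntegrable_and_continuousOn hg.isTrajCtrl).1 hu⟩, by simpa using hg.mem_Kdst⟩

lemma Ts_eq_and_Td_eq (hg : S.IsGeodesic x₀ τ y α) (hu : u ∈ Icc 0 τ) :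
    S.Ts (y u) = ENNReal.ofReal u ∧ S.Td (y u) = ENNReal.ofReal (τ - u) := by
  refine ENNReal.eq_and_eq_of_add_le
    (minTime_le_ofReal (hg.mem_reachTimes_reverse hg.isTrajCtrl.2.2.1 hu))
    (minTime_le_ofReal (hg.mem_reachTimes_shift hg.isTrajCtrl.2.2.1 hu))
    ENNReal.ofReal_ne_top ENNReal.ofReal_ne_top ?_
  rw [← ENNReal.ofReal_add hu.1 (sub_nonneg.2 hu.2), add_sub_cancel, ← hg.Td_eq]
  exact S.Td_le_Ts_add_Td hg.mem_Xsrc _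

lemma Fv_le (hg : S.IsGeodesic x₀ τ y α) (hu : u ∈ Icc 0 τ) (z : Pt d) :
    S.Fv (y u) ≤ S.Fv z := by
  obtain ⟨hTs, hTd⟩ := hg.Ts_eq_and_Td_eq hu
  rw [Fv_eq_kruzkov, Fv_eq_kruzkov, hTs, hTd, ← ENNReal.ofReal_add hu.1 (sub_nonneg.2 hu.2),
    add_sub_cancel, ← hg.Td_eq]
  exact kruzkov_strictMono.monotone (S.Td_le_Ts_add_Td hg.mem_Xsrc z)

lemma notMem_Ksrc_union_Kdst (hg : S.IsGeodesic x₀ τ y α) (hu : u ∈ Ioo 0 τ) :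
    y u ∉ S.Ksrc ∪ S.Kdst := by
  obtain ⟨hTs, hTd⟩ := hg.Ts_eq_and_Td_eq (Ioo_subset_Icc_self hu)
  have hyΩ := hg.isTrajCtrl.2.2.1 u (Ioo_subset_Icc_self hu)
  rintro (hsrc | hdst)
  · have h0 : S.Ts (y u) = 0 := minTime_eq_zero S.hd hyΩ hsrc
    rw [hTs, ENNReal.ofReal_eq_zero] at h0
    exact h0.not_gt hu.1
  · have h0 : S.Td (y u) = 0 := minTime_eq_zero S.hd hyΩ hdst
    rw [hTd, ENNReal.ofReal_eq_zero] at h0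
    linarith [hu.2]

lemma mem_closure_sublevel (hg : S.IsGeodesic x₀ τ y α)
    (hFv : ContinuousOn S.Fv (closure S.Ω)) {ε : ℝ} (hε : 0 < ε) (hu : u ∈ Icc 0 τ) :
    y u ∈ closure {z ∈ S.Ω \ (S.Ksrc ∪ S.Kdst) | S.Fv z < sInf (S.Fv '' S.Ω) + ε} := by
  set B := {z ∈ S.Ω \ (S.Ksrc ∪ S.Kdst) | S.Fv z < sInf (S.Fv '' S.Ω) + ε}
  have hτ : 0 < τ := by
    refine hg.isTrajCtrl.1.lt_of_ne fun hτ => S.hKdisj.ne_of_mem hg.mem_Xsrc.1 hg.mem_Kdst ?_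
    rw [← hτ, hg.isTrajCtrl.2.1]
  have hmin : ∀ v ∈ Icc 0 τ, S.Fv (y v) ≤ sInf (S.Fv '' S.Ω) := fun v hv =>
    le_csInf (S.hΩne.image _) (forall_mem_image.2 fun z _ => hg.Fv_le hv z)
  have hIoo : MapsTo y (Ioo 0 τ) (closure B) := fun v hv => by
    have hv' := Ioo_subset_Icc_self hv
    exact mem_closure_sep_lt (hg.isTrajCtrl.2.2.1 v hv')
      ((hFv _ (hg.isTrajCtrl.2.2.1 v hv')).mono subset_closure)
      (S.hKsrcComp.isClosed.union S.hKdstComp.isClosed) (hg.notMem_Ksrc_union_Kdst hv)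
      ((hmin v hv').trans_lt (lt_add_of_pos_right _ hε))
  have hcont : ContinuousWithinAt y (Ioo 0 τ) u :=
    ((S.intervalIntegrable_and_continuousOn hg.isTrajCtrl).2 u hu).mono Ioo_subset_Icc_self
  rw [← closure_closure (s := B)]
  exact hcont.mem_closure (closure_Ioo hτ.ne ▸ hu) hIoo

end IsGeodesic

end Setting

theorem regularized_neighborhood_values_general {d : ℕ} (S : Setting d)
    (hvd : ContinuousOn S.vd (closure S.Ω)) (hvs : ContinuousOn S.vs (closure S.Ω))
    (μ η : ℝ) (hμ0 : 0 < μ) (hμη : μ < η)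
    (G : Pt d → ℝ)
    (hGapp : ∀ x ∈ closure (S.Oset η), |G x - S.Fv x| ≤ μ)
    (Omueta : Set (Pt d))
    (hOdef : Omueta = {x ∈ S.Ω \ (S.Ksrc ∪ S.Kdst) | G x < sInf (S.Fv '' S.Ω) + η}) :
    S.GammaFwd ⊆ closure Omueta ∧
    ∀ x ∈ S.GammaFwd,
      S.vsC (closure Omueta) x = S.vs x ∧ S.vdC (closure Omueta) x = S.vd x := by
  have hFv : ContinuousOn S.Fv (closure S.Ω) := (hvs.add hvd).sub (hvs.mul hvd)
  have hsub : {z ∈ S.Ω \ (S.Ksrc ∪ S.Kdst) | S.Fv z < sInf (S.Fv '' S.Ω) + (η - μ)} ⊆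
      Omueta := by
    rintro z ⟨hz, hzFv⟩
    have hzO : z ∈ S.Oset η := ⟨hz, by linarith⟩
    rw [hOdef]
    exact ⟨hz, by linarith [(abs_le.1 (hGapp z (subset_closure hzO))).2]⟩
  have hOΩ : closure Omueta ⊆ closure S.Ω := closure_mono (hOdef ▸ fun z hz => hz.1.1)
  suffices ∀ p ∈ S.GammaFwd, p ∈ closure Omueta ∧
      S.vsC (closure Omueta) p = S.vs p ∧ S.vdC (closure Omueta) p = S.vd p from
    ⟨fun p hp => (this p hp).1, fun p hp => (this p hp).2⟩
  intro p hp
  obtain ⟨x₀, τ, y, α, hg, t, ht, rfl⟩ := S.exists_isGeodesic_of_mem_GammaFwd hp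
  have hyO : ∀ u ∈ Icc 0 τ, y u ∈ closure Omueta := fun u hu =>
    closure_mono hsub (hg.mem_closure_sublevel hFv (sub_pos.2 hμη) hu)
  obtain ⟨hTs, hTd⟩ := hg.Ts_eq_and_Td_eq ht
  exact ⟨hyO t ht, val_eq_of_subset hOΩ (hg.mem_reachTimes_reverse hyO ht) hTs,
    val_eq_of_subset hOΩ (hg.mem_reachTimes_shift hyO ht) hTd⟩

/-- For `0 < μ < η` and a continuous `G` approximating `F_v` within `μ` on
`cl(O_η)`, the regularized sublevel set `O^μ_η` contains `Γ*` in its closure, and the value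
functions constrained to `cl(O^μ_η)` coincide with the unconstrained ones on `Γ*`. -/
theorem regularized_neighborhood_values {d : ℕ} (S : Setting d)
    (hvd : ContinuousOn S.vd (closure S.Ω)) (hvs : ContinuousOn S.vs (closure S.Ω))
    (hne : S.GammaFwd.Nonempty)
    (μ η : ℝ) (hμ0 : 0 < μ) (hμη : μ < η)
    (G : Pt d → ℝ) (hGcont : ContinuousOn G (closure S.Ω))
    (hGapp : ∀ x ∈ closure (S.Oset η), |G x - S.Fv x| ≤ μ)
    (Omueta : Set (Pt d))
    (hOdef : Omueta = {x ∈ S.Ω \ (S.Ksrc ∪ S.Kdst) | G x < sInf (S.Fv '' S.Ω) + η}) :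
    S.GammaFwd ⊆ closure Omueta ∧
    ∀ x ∈ S.GammaFwd,
      S.vsC (closure Omueta) x = S.vs x ∧ S.vdC (closure Omueta) x = S.vd x :=
  regularized_neighborhood_values_general S hvd hvs μ η hμ0 hμη G hGapp Omueta hOdef
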